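/- arXiv:2411.16963 — 5 statements merged into one kernel-verified Lean document; each statement's English description precedes it below -/
import Mathlib

section
/- Let β, p, m, n be positive integers with β ≥ p + 1. Let a : Fin m → Fin n → {0,1} be a 0-1 coefficient matrix such that each row has at most p nonzero entries, and let x : Fin n → {0,1}. Then ∑_{i=1}^m β^(i-1) · (∑_{j=1}^n a_{ij} x_j) = (β^m - 1)/(β - 1) if and only if ∑_{j=1}^n a_{ij} x_j = 1 for every i. -/
lemma geom_nat (β m : ℕ) (hβ : 1 ≤ β) :
    (β - 1) * ∑ i ∈ Finset.range m, β ^ i = β ^ m - 1 := by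
  induction m with
  | zero => simp
  | succ m ih =>
    rw [Finset.sum_range_succ, Nat.mul_add, ih, pow_succ, mul_comm (β ^ m) β]
    have hB : 1 ≤ β ^ m := Nat.one_le_pow _ _ hβ
    have h1 : (β - 1) * β ^ m = β * β ^ m - β ^ m := by
      rw [Nat.sub_mul, one_mul]
    have h2 : β ^ m ≤ β * β ^ m := Nat.le_mul_of_pos_left _ hβ
    rw [h1]
    omega

lemma digit_bound (β m : ℕ) (hβ : 1 ≤ β) (d : ℕ → ℕ) (hd : ∀ i < m, d i ≤ β - 1) :
    ∑ i ∈ Finset.range m, β ^ i * d i ≤ β ^ m - 1 := by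
  calc ∑ i ∈ Finset.range m, β ^ i * d i
      ≤ ∑ i ∈ Finset.range m, β ^ i * (β - 1) := by
        apply Finset.sum_le_sum
        intro i hi
        exact Nat.mul_le_mul_left _ (hd i (Finset.mem_range.mp hi))
    _ = (β - 1) * ∑ i ∈ Finset.range m, β ^ i := by
        rw [Finset.mul_sum]; simp [Nat.mul_comm]
    _ = β ^ m - 1 := geom_nat β m hβ

lemma digit_uniq (β : ℕ) (hβ : 1 ≤ β) :
    ∀ m (d e : ℕ → ℕ), (∀ i < m, d i ≤ β - 1) → (∀ i < m, e i ≤ β - 1) →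
    (∑ i ∈ Finset.range m, β ^ i * d i = ∑ i ∈ Finset.range m, β ^ i * e i) →
    ∀ i < m, d i = e i := by
  intro m
  induction m with
  | zero => intro d e _ _ _ i hi; omega
  | succ m ih =>
    intro d e hd he hsum i hi
    rw [Finset.sum_range_succ, Finset.sum_range_succ] at hsum
    have hA : ∑ i ∈ Finset.range m, β ^ i * d i ≤ β ^ m - 1 :=
      digit_bound β m hβ d (fun i hi => hd i (by omega))
    have hB : ∑ i ∈ Finset.range m, β ^ i * e i ≤ β ^ m - 1 :=
      digit_bound β m hβ e (fun i hi => he i (by omega))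
    have hpow : 1 ≤ β ^ m := Nat.one_le_pow _ _ hβ
    have hdm : d m = e m := by
      have h1 : (∑ i ∈ Finset.range m, β ^ i * d i + β ^ m * d m) / β ^ m = d m := by
        rw [Nat.add_mul_div_left _ _ hpow, Nat.div_eq_of_lt (by omega)]; omega
      have h2 : (∑ i ∈ Finset.range m, β ^ i * e i + β ^ m * e m) / β ^ m = e m := by
        rw [Nat.add_mul_div_left _ _ hpow, Nat.div_eq_of_lt (by omega)]; omega
      rw [← h1, ← h2, hsum]
    have hrest : ∑ i ∈ Finset.range m, β ^ i * d i = ∑ i ∈ Finset.range m, β ^ i * e i := by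
      rw [hdm] at hsum; omega
    rcases Nat.lt_or_ge i m with h | h
    · exact ih d e (fun i hi => hd i (by omega)) (fun i hi => he i (by omega)) hrest i h
    · have : i = m := by omega
      rw [this]; exact hdm

theorem aggregation_equiv
    (β p m n : ℕ) (hp : 0 < p) (hm : 0 < m) (hn : 0 < n)
    (hβ : p + 1 ≤ β)
    (a : Fin m → Fin n → ℕ) (ha : ∀ i j, a i j = 0 ∨ a i j = 1)
    (hrow : ∀ i, (Finset.univ.filter (fun j => a i j ≠ 0)).card ≤ p)
    (x : Fin n → ℕ) (hx : ∀ j, x j = 0 ∨ x j = 1) :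
    (∑ i : Fin m, β ^ (i : ℕ) * ∑ j : Fin n, a i j * x j) = (β ^ m - 1) / (β - 1)
      ↔ ∀ i : Fin m, ∑ j : Fin n, a i j * x j = 1 := by
  have hβ1 : 1 ≤ β := by omega
  -- row sums bounded by p
  have hs : ∀ i : Fin m, ∑ j : Fin n, a i j * x j ≤ p := by
    intro i
    have h1 : ∑ j : Fin n, a i j * x j
        = ∑ j ∈ Finset.univ.filter (fun j => a i j ≠ 0), a i j * x j := by
      apply (Finset.sum_subset (Finset.filter_subset _ _) _).symm
      intro j _ hj
      simp only [Finset.mem_filter, Finset.mem_univ, true_and, not_not] at hj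
      simp [hj]
    rw [h1]
    calc ∑ j ∈ Finset.univ.filter (fun j => a i j ≠ 0), a i j * x j
        ≤ ∑ j ∈ Finset.univ.filter (fun j => a i j ≠ 0), 1 := by
          apply Finset.sum_le_sum
          intro j _
          rcases ha i j with h | h <;> rcases hx j with h' | h' <;> simp [h, h']
      _ = (Finset.univ.filter (fun j => a i j ≠ 0)).card := by simp
      _ ≤ p := hrow i
  -- RHS is geometric sum
  have hrhs : (β ^ m - 1) / (β - 1) = ∑ i ∈ Finset.range m, β ^ i := by
    rw [← geom_nat β m hβ1, Nat.mul_div_cancel_left _ (by omega : 0 < β - 1)]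
  -- define digit function
  set s : ℕ → ℕ := fun i => if h : i < m then ∑ j : Fin n, a ⟨i, h⟩ j * x j else 0 with hsdef
  have hfin : (∑ i : Fin m, β ^ (i : ℕ) * ∑ j : Fin n, a i j * x j)
      = ∑ i ∈ Finset.range m, β ^ i * s i := by
    rw [← Fin.sum_univ_eq_sum_range (fun i => β ^ i * s i)]
    apply Finset.sum_congr rfl
    intro i _
    simp [hsdef, i.isLt]
  rw [hfin, hrhs]
  constructor
  · intro h i
    have hsum : ∑ k ∈ Finset.range m, β ^ k * s k = ∑ k ∈ Finset.range m, β ^ k * 1 := by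
      simpa using h
    have := digit_uniq β hβ1 m s (fun _ => 1)
      (fun k hk => by
        simp only [hsdef]
        rw [dif_pos hk]
        have := hs ⟨k, hk⟩
        omega)
      (fun k hk => by show (1:ℕ) ≤ β - 1; omega) hsum i.val i.isLt
    simp only [hsdef, dif_pos i.isLt] at this
    simpa using this
  · intro h
    apply Finset.sum_congr rfl
    intro i hi
    have hi' := Finset.mem_range.mp hi
    simp only [hsdef, dif_pos hi']
    rw [h ⟨i, hi'⟩, mul_one]
end

section
/- For Boolean variables x, y, z, the disjunction x ∨ y ∨ z is true if and only if there exist Booleans a, b, c, d such that each of the three clauses (¬x ∨ a ∨ b), (y ∨ b ∨ c), (¬z ∨ c ∨ d) has exactly one true literal. -/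
def exactlyOne (p q r : Prop) : Prop :=
  (p ∧ ¬q ∧ ¬r) ∨ (¬p ∧ q ∧ ¬r) ∨ (¬p ∧ ¬q ∧ r)

theorem threeSAT_to_one_in_three
    (x y z : Bool) :
    (x = true ∨ y = true ∨ z = true)
    ↔ ∃ a b c d : Bool,
        exactlyOne (x = false) (a = true) (b = true) ∧
        exactlyOne (y = true) (b = true) (c = true) ∧
        exactlyOne (z = false) (c = true) (d = true) := by
  unfold exactlyOne
  cases x <;> cases y <;> cases z <;> simp
end

section
/- Let β, p, m, n be positive integers with β > p, let a : Fin m → Fin n → {0,1} have at most p nonzero entries per row, and let x : Fin n → {0,1} satisfy ∑_i β^(i-1) (∑_j a_{ij} x_j) = (β^m - 1)/(β-1). Then ∑_j a_{m,j} x_j = 1 (the last constraint holds). -/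
theorem aggregation_last_constraint
    (β p m n : ℕ) (hp : 0 < p) (hm : 0 < m) (hn : 0 < n)
    (hβ : p < β)
    (a : Fin m → Fin n → ℕ) (ha : ∀ i j, a i j = 0 ∨ a i j = 1)
    (hrow : ∀ i, (Finset.univ.filter (fun j => a i j ≠ 0)).card ≤ p)
    (x : Fin n → ℕ) (hx : ∀ j, x j = 0 ∨ x j = 1)
    (hagg : (∑ i : Fin m, β ^ (i : ℕ) * ∑ j : Fin n, a i j * x j) = (β ^ m - 1) / (β - 1)) :
    ∑ j : Fin n, a ⟨m - 1, Nat.sub_lt hm Nat.one_pos⟩ j * x j = 1 := by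
  obtain ⟨k, rfl⟩ : ∃ k, m = k + 1 := ⟨m - 1, (Nat.succ_pred_eq_of_pos hm).symm⟩
  have hβ1 : 1 ≤ β := by omega
  -- row sums bounded by p
  have hS : ∀ i : Fin (k + 1), (∑ j : Fin n, a i j * x j) ≤ p := by
    intro i
    calc ∑ j : Fin n, a i j * x j ≤ ∑ j : Fin n, a i j := by
          apply Finset.sum_le_sum
          intro j _
          rcases hx j with h | h <;> simp [h]
      _ = ∑ j ∈ Finset.univ.filter (fun j => a i j ≠ 0), a i j := by
          rw [Finset.sum_filter_ne_zero]
      _ ≤ ∑ j ∈ Finset.univ.filter (fun j => a i j ≠ 0), 1 := by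
          apply Finset.sum_le_sum
          intro j hj
          rcases ha i j with h | h <;> simp [h] at hj ⊢
      _ = (Finset.univ.filter (fun j => a i j ≠ 0)).card := by simp
      _ ≤ p := hrow i
  -- geometric sum identity
  have hgeom : ∀ t : ℕ, (β - 1) * ∑ i ∈ Finset.range t, β ^ i = β ^ t - 1 := by
    intro t
    induction t with
    | zero => simp
    | succ t ih =>
      rw [Finset.sum_range_succ, Nat.mul_add, ih]
      have h1 : 1 ≤ β ^ t := Nat.one_le_pow _ _ (by omega)
      have h2 : β ^ t ≤ β * β ^ t := Nat.le_mul_of_pos_left _ (by omega)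
      have h3 : (β - 1) * β ^ t = β * β ^ t - β ^ t := by
        rw [Nat.sub_mul, Nat.one_mul]
      rw [pow_succ, h3]
      have : β ^ t * β = β * β ^ t := Nat.mul_comm _ _
      omega
  have hrhs : (β ^ (k + 1) - 1) / (β - 1) = ∑ i ∈ Finset.range (k + 1), β ^ i := by
    rw [← hgeom (k + 1), Nat.mul_div_cancel_left _ (by omega)]
  -- p * geometric sum < β^t
  have hpb : ∀ t : ℕ, p * ∑ i ∈ Finset.range t, β ^ i < β ^ t := by
    intro t
    induction t with
    | zero => simpa using Nat.one_pos
    | succ t ih =>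
      rw [Finset.sum_range_succ, Nat.mul_add, pow_succ]
      have : p * β ^ t + β ^ t ≤ β ^ t * β := by
        calc p * β ^ t + β ^ t = (p + 1) * β ^ t := by ring
          _ ≤ β * β ^ t := Nat.mul_le_mul_right _ (by omega)
          _ = β ^ t * β := Nat.mul_comm _ _
      omega
  -- split the aggregated sum
  rw [Fin.sum_univ_castSucc] at hagg
  have hlast : (Fin.last k) = (⟨k + 1 - 1, Nat.sub_lt hm Nat.one_pos⟩ : Fin (k + 1)) := by
    ext; simp
  rw [hlast] at hagg
  simp only [Fin.val_mk, Fin.coe_castSucc] at hagg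
  set s := ∑ j : Fin n, a ⟨k + 1 - 1, Nat.sub_lt hm Nat.one_pos⟩ j * x j with hs
  set G := ∑ i ∈ Finset.range k, β ^ i with hG
  have hT : (∑ i : Fin k, β ^ (i : ℕ) * ∑ j : Fin n, a i.castSucc j * x j)
      ≤ p * G := by
    calc (∑ i : Fin k, β ^ (i : ℕ) * ∑ j : Fin n, a i.castSucc j * x j)
        ≤ ∑ i : Fin k, β ^ (i : ℕ) * p := by
          apply Finset.sum_le_sum
          intro i _
          exact Nat.mul_le_mul_left _ (hS _)
      _ = (∑ i : Fin k, β ^ (i : ℕ)) * p := by rw [Finset.sum_mul]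
      _ = G * p := by rw [hG, Fin.sum_univ_eq_sum_range (fun i => β ^ i) k]
      _ = p * G := Nat.mul_comm _ _
  rw [hrhs, Finset.sum_range_succ, ← hG] at hagg
  have hGb : p * G < β ^ k := hpb k
  have hG2 : G ≤ p * G := Nat.le_mul_of_pos_left _ hp
  set T := ∑ i : Fin k, β ^ (i : ℕ) * ∑ j : Fin n, a i.castSucc j * x j with hTdef
  -- hagg : T + β ^ (k+1-1) * s = G + β ^ k
  have hk1 : k + 1 - 1 = k := rfl
  rw [hk1] at hagg
  have hs0 : s ≠ 0 := by
    intro h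
    rw [h] at hagg
    omega
  have hs2 : s < 2 := by
    by_contra h
    have : β ^ k * 2 ≤ β ^ k * s := Nat.mul_le_mul_left _ (by omega)
    omega
  omega
end

section
/- Let β > p ≥ 1 and m ≥ 1 be integers, let a : Fin m → Fin n → {0,1} have at most p nonzeros per row, let x : Fin n → {0,1}, and let 1 ≤ ℓ ≤ m. If ∑_i β^(i-1)(∑_j a_{ij}x_j) = (β^m-1)/(β-1) and ∑_j a_{ij}x_j = 1 for all i > ℓ, then ∑_j a_{ℓj}x_j ≤ 1. -/
private lemma geom_mul (β : ℕ) (hβ : 2 ≤ β) (m : ℕ) :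
    (β - 1) * ∑ i ∈ Finset.range m, β ^ i = β ^ m - 1 := by
  induction m with
  | zero => simp
  | succ k ih =>
    rw [Finset.sum_range_succ, Nat.mul_add, ih]
    have h1 : 1 ≤ β ^ k := Nat.one_le_pow _ _ (by omega)
    have h2 : β ^ k ≤ β ^ (k + 1) := Nat.pow_le_pow_right (by omega) (by omega)
    have : (β - 1) * β ^ k = β ^ (k + 1) - β ^ k := by
      rw [Nat.sub_mul, one_mul, pow_succ, mul_comm]
    omega

private lemma geom_div (β : ℕ) (hβ : 2 ≤ β) (m : ℕ) :
    (β ^ m - 1) / (β - 1) = ∑ i ∈ Finset.range m, β ^ i := by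
  rw [← geom_mul β hβ m, Nat.mul_div_cancel_left _ (by omega)]

private lemma geomLtAux (β : ℕ) (hβ : 2 ≤ β) (k : ℕ) :
    ∑ i ∈ Finset.range (k + 1), β ^ i < 2 * β ^ k := by
  induction k with
  | zero => simp
  | succ k ih =>
    rw [Finset.sum_range_succ]
    have h2 : 2 * β ^ k ≤ β ^ (k + 1) := by
      rw [pow_succ, mul_comm (β ^ k) β]
      exact Nat.mul_le_mul_right _ hβ

    omega

theorem inductive_step_upper
    (β p m n : ℕ) (hp : 1 ≤ p) (hβ : p < β) (hm : 1 ≤ m)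
    (a : Fin m → Fin n → ℕ) (ha : ∀ i j, a i j = 0 ∨ a i j = 1)
    (hrow : ∀ i, (Finset.univ.filter (fun j => a i j ≠ 0)).card ≤ p)
    (x : Fin n → ℕ) (hx : ∀ j, x j = 0 ∨ x j = 1)
    (ℓ : Fin m)
    (hagg : (∑ i : Fin m, β ^ (i : ℕ) * ∑ j : Fin n, a i j * x j) = (β ^ m - 1) / (β - 1))
    (hhigh : ∀ i : Fin m, ℓ < i → ∑ j : Fin n, a i j * x j = 1) :
    ∑ j : Fin n, a ℓ j * x j ≤ 1 := by
  have hβ2 : 2 ≤ β := by omega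
  set S : Fin m → ℕ := fun i => ∑ j : Fin n, a i j * x j with hS
  -- rewrite RHS as geometric sum over Fin m
  have hagg' : (∑ i : Fin m, β ^ (i : ℕ) * S i) = ∑ i : Fin m, β ^ (i : ℕ) := by
    rw [hagg, geom_div β hβ2 m, ← Fin.sum_univ_eq_sum_range (fun i => β ^ i) m]
  -- split both sides by the predicate i ≤ ℓ
  have hsplit1 := Finset.sum_filter_add_sum_filter_not Finset.univ
    (fun i : Fin m => i ≤ ℓ) (fun i => β ^ (i : ℕ) * S i)
  have hsplit2 := Finset.sum_filter_add_sum_filter_not Finset.univ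
    (fun i : Fin m => i ≤ ℓ) (fun i => β ^ (i : ℕ))
  have hhigheq : ∑ i ∈ Finset.univ.filter (fun i : Fin m => ¬ i ≤ ℓ), β ^ (i : ℕ) * S i
      = ∑ i ∈ Finset.univ.filter (fun i : Fin m => ¬ i ≤ ℓ), β ^ (i : ℕ) := by
    apply Finset.sum_congr rfl
    intro i hi
    simp only [Finset.mem_filter, not_le] at hi
    simp only [hS]
    rw [hhigh i hi.2, mul_one]
  have key : ∑ i ∈ Finset.univ.filter (fun i : Fin m => i ≤ ℓ), β ^ (i : ℕ) * S i
      = ∑ i ∈ Finset.univ.filter (fun i : Fin m => i ≤ ℓ), β ^ (i : ℕ) := by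
    omega
  -- single term bound
  have hmem : ℓ ∈ Finset.univ.filter (fun i : Fin m => i ≤ ℓ) := by simp
  have hle : β ^ (ℓ : ℕ) * S ℓ ≤ ∑ i ∈ Finset.univ.filter (fun i : Fin m => i ≤ ℓ), β ^ (i : ℕ) * S i :=
    Finset.single_le_sum (f := fun i : Fin m => β ^ (i : ℕ) * S i) (fun i _ => Nat.zero_le _) hmem
  -- convert RHS to range sum
  have hconv : ∑ i ∈ Finset.univ.filter (fun i : Fin m => i ≤ ℓ), β ^ (i : ℕ)
      = ∑ k ∈ Finset.range ((ℓ : ℕ) + 1), β ^ k := by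
    have h1 : (∑ i : Fin m, if (i : ℕ) ≤ (ℓ : ℕ) then β ^ (i : ℕ) else 0)
        = ∑ k ∈ Finset.range m, (if k ≤ (ℓ : ℕ) then β ^ k else 0) :=
      Fin.sum_univ_eq_sum_range (fun k => if k ≤ (ℓ : ℕ) then β ^ k else 0) m
    rw [← Finset.sum_filter, ← Finset.sum_filter] at h1
    have hset : (Finset.range m).filter (fun k => k ≤ (ℓ : ℕ)) = Finset.range ((ℓ : ℕ) + 1) := by
      ext k
      simp only [Finset.mem_filter, Finset.mem_range]
      have := ℓ.isLt
      omega
    rw [hset] at h1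
    rw [← h1]
    apply Finset.sum_congr
    · ext i; simp only [Finset.mem_filter, Fin.le_def]
    · intros; rfl
  have hfin : β ^ (ℓ : ℕ) * S ℓ < 2 * β ^ (ℓ : ℕ) := by
    calc β ^ (ℓ : ℕ) * S ℓ ≤ _ := hle
    _ = ∑ k ∈ Finset.range ((ℓ : ℕ) + 1), β ^ k := by rw [key, hconv]
    _ < 2 * β ^ (ℓ : ℕ) := geomLtAux β hβ2 _
  have hpos : 0 < β ^ (ℓ : ℕ) := Nat.pow_pos (by omega)
  rw [mul_comm 2 (β ^ (ℓ : ℕ))] at hfin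
  have h2 := Nat.lt_of_mul_lt_mul_left hfin
  have hgoal : S ℓ = ∑ j : Fin n, a ℓ j * x j := rfl
  omega
end

section
/- Let β > p ≥ 1 and m ≥ 1 be integers, let a : Fin m → Fin n → {0,1} have at most p nonzeros per row, let x : Fin n → {0,1}, and let 1 ≤ ℓ ≤ m. If ∑_i β^(i-1)(∑_j a_{ij}x_j) = (β^m-1)/(β-1) and ∑_j a_{ij}x_j = 1 for all i > ℓ, then ∑_j a_{ℓj}x_j ≥ 1. -/
open Finset

theorem geom_aux (β : ℕ) (hβ : 1 ≤ β) :
    ∀ N, (β - 1) * ∑ k ∈ Finset.range N, β ^ k = β ^ N - 1 := by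
  intro N
  induction N with
  | zero => simp
  | succ N ih =>
    rw [Finset.sum_range_succ, Nat.mul_add, ih, pow_succ]
    have h1 : 1 ≤ β ^ N := Nat.one_le_pow _ _ hβ
    have h2 : (β - 1) * β ^ N = β * β ^ N - β ^ N := by
      rw [Nat.sub_mul, one_mul]
    have h3 : β ^ N ≤ β * β ^ N := Nat.le_mul_of_pos_left _ hβ
    have h4 : β ^ N * β = β * β ^ N := mul_comm _ _
    omega

theorem inductive_step_lower
    (β p m n : ℕ) (hp : 1 ≤ p) (hβ : p < β) (hm : 1 ≤ m)
    (a : Fin m → Fin n → ℕ) (ha : ∀ i j, a i j = 0 ∨ a i j = 1)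
    (hrow : ∀ i, (Finset.univ.filter (fun j => a i j ≠ 0)).card ≤ p)
    (x : Fin n → ℕ) (hx : ∀ j, x j = 0 ∨ x j = 1)
    (ℓ : Fin m)
    (hagg : (∑ i : Fin m, β ^ (i : ℕ) * ∑ j : Fin n, a i j * x j) = (β ^ m - 1) / (β - 1))
    (hhigh : ∀ i : Fin m, ℓ < i → ∑ j : Fin n, a i j * x j = 1) :
    1 ≤ ∑ j : Fin n, a ℓ j * x j := by
  have hβ2 : 2 ≤ β := by omega
  have hβ1 : 1 ≤ β := by omega
  -- row sums are ≤ p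
  have hSle : ∀ i : Fin m, (∑ j : Fin n, a i j * x j) ≤ p := by
    intro i
    calc (∑ j : Fin n, a i j * x j)
        ≤ ∑ j : Fin n, (if a i j ≠ 0 then 1 else 0) := by
          apply Finset.sum_le_sum
          intro j _
          rcases ha i j with h | h <;> rcases hx j with h' | h' <;> simp [h, h']
      _ = (Finset.univ.filter (fun j => a i j ≠ 0)).card := by
          simp [Finset.sum_ite, Finset.filter_filter]
      _ ≤ p := hrow i
  by_contra hcon
  push_neg at hcon
  have hS0 : ∑ j : Fin n, a ℓ j * x j = 0 := by omega
  -- transfer to ℕ-indexed sums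
  set f : ℕ → ℕ := fun k => β ^ k * (if h : k < m then ∑ j : Fin n, a ⟨k, h⟩ j * x j else 0)
    with hf
  have hdiv : (β ^ m - 1) / (β - 1) = ∑ k ∈ Finset.range m, β ^ k := by
    apply Nat.div_eq_of_eq_mul_left (by omega)
    rw [mul_comm, geom_aux β hβ1]
  have hagg' : ∑ k ∈ Finset.range m, f k = ∑ k ∈ Finset.range m, β ^ k := by
    rw [← Fin.sum_univ_eq_sum_range f m, ← hdiv, ← hagg]
    apply Finset.sum_congr rfl
    intro i _
    simp only [hf, i.isLt, dif_pos]
  have hm' : (ℓ : ℕ) + 1 ≤ m := ℓ.isLt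
  have e1 : ∑ k ∈ Finset.range ((ℓ : ℕ) + 1), f k + ∑ k ∈ Finset.Ico ((ℓ : ℕ) + 1) m, f k
      = ∑ k ∈ Finset.range m, f k := Finset.sum_range_add_sum_Ico f hm'
  have e2 : ∑ k ∈ Finset.range ((ℓ : ℕ) + 1), β ^ k + ∑ k ∈ Finset.Ico ((ℓ : ℕ) + 1) m, β ^ k
      = ∑ k ∈ Finset.range m, β ^ k := Finset.sum_range_add_sum_Ico _ hm'
  have hIco : ∑ k ∈ Finset.Ico ((ℓ : ℕ) + 1) m, f k
      = ∑ k ∈ Finset.Ico ((ℓ : ℕ) + 1) m, β ^ k := by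
    apply Finset.sum_congr rfl
    intro k hk
    rw [Finset.mem_Ico] at hk
    have hkm : k < m := hk.2
    have : ℓ < (⟨k, hkm⟩ : Fin m) := by
      simp [Fin.lt_def]; omega
    simp only [hf, hkm, dif_pos, hhigh ⟨k, hkm⟩ this, mul_one]
  have key : ∑ k ∈ Finset.range ((ℓ : ℕ) + 1), f k
      = ∑ k ∈ Finset.range ((ℓ : ℕ) + 1), β ^ k := by omega
  rw [Finset.sum_range_succ, Finset.sum_range_succ] at key
  have hfl : f (ℓ : ℕ) = 0 := by
    simp only [hf, ℓ.isLt, dif_pos]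
    have : (⟨(ℓ : ℕ), ℓ.isLt⟩ : Fin m) = ℓ := by ext; rfl
    rw [this, hS0, mul_zero]
  rw [hfl, add_zero] at key
  -- bound the low part
  have hbound : ∑ k ∈ Finset.range (ℓ : ℕ), f k ≤ β ^ (ℓ : ℕ) - 1 := by
    calc ∑ k ∈ Finset.range (ℓ : ℕ), f k
        ≤ ∑ k ∈ Finset.range (ℓ : ℕ), β ^ k * p := by
          apply Finset.sum_le_sum
          intro k hk
          rw [Finset.mem_range] at hk
          have hkm : k < m := lt_of_lt_of_le hk (by omega)
          simp only [hf, hkm, dif_pos]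
          exact Nat.mul_le_mul_left _ (hSle _)
      _ = (∑ k ∈ Finset.range (ℓ : ℕ), β ^ k) * p := by rw [Finset.sum_mul]
      _ ≤ (∑ k ∈ Finset.range (ℓ : ℕ), β ^ k) * (β - 1) := by
          apply Nat.mul_le_mul_left; omega
      _ = β ^ (ℓ : ℕ) - 1 := by rw [mul_comm, geom_aux β hβ1]
  have hpow : 1 ≤ β ^ (ℓ : ℕ) := Nat.one_le_pow _ _ (by omega)
  omega
end
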